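/- For all real numbers x and y with x ≠ 0, the identity |x − y| − |x| = −y·sgn(x) + 2∫₀^y (1(x ≤ s) − 1(x ≤ 0)) ds holds, where sgn(x) = 1(x > 0) − 1(x < 0) and the integral is the signed (oriented) Lebesgue integral from 0 to y. -/

import Mathlib

noncomputable def sgn (x : ℝ) : ℝ := if x > 0 then 1 else if x < 0 then -1 else 0

/-!
Both sides vanish at `y = 0`, and as functions of `y` they have the same right derivative:
`y ↦ |y - x|` has right derivative `1` for `x ≤ y` and `-1` for `y < x`, and for `x ≠ 0` this step
function plus `sgn x` is `2 (1(x ≤ y) - 1(x ≤ 0))`. The identity is therefore the fundamental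
theorem of calculus for right derivatives.
-/

open Set

theorem sgn_eq_one_sub_two_mul_ite {x : ℝ} (hx : x ≠ 0) :
    sgn x = 1 - 2 * (if x ≤ 0 then 1 else 0) := by
  rcases hx.lt_or_gt with hneg | hpos
  · norm_num [sgn, hneg, hneg.le, hneg.not_gt]
  · simp [sgn, hpos, hpos.not_ge]

theorem monotone_ite_le_one_neg_one (c : ℝ) :
    Monotone fun s : ℝ => if c ≤ s then (1 : ℝ) else -1 := by
  intro a b hab
  dsimp only
  split_ifs with ha hb
  exacts [le_rfl, absurd (ha.trans hab) hb, by norm_num, le_rfl]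

theorem hasDerivWithinAt_abs_sub_Ioi (c t : ℝ) :
    HasDerivWithinAt (fun s => |s - c|) (if c ≤ t then 1 else -1) (Ioi t) t := by
  split_ifs with h
  · refine ((hasDerivWithinAt_id t _).sub_const c).congr (fun s hs => ?_) ?_
    · exact abs_of_nonneg (by linarith [mem_Ioi.1 hs])
    · exact abs_of_nonneg (sub_nonneg.2 h)
  · have := (hasDerivAt_abs_neg (sub_neg.2 (not_le.1 h))).comp t ((hasDerivAt_id t).sub_const c)
    simpa [Function.comp_def] using this.hasDerivWithinAt

theorem integral_ite_le_one_neg_one (c a b : ℝ) :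
    ∫ s in a..b, (if c ≤ s then (1 : ℝ) else -1) = |b - c| - |a - c| :=
  intervalIntegral.integral_eq_sub_of_hasDeriv_right
    ((continuous_id.sub continuous_const).abs.continuousOn)
    (fun t _ => hasDerivWithinAt_abs_sub_Ioi c t)
    ((monotone_ite_le_one_neg_one c).intervalIntegrable)

theorem knight_identity (x y : ℝ) (hx : x ≠ 0) :
    |x - y| - |x| =
      -y * sgn x +
        2 * ∫ s in (0:ℝ)..y,
          ((if x ≤ s then (1:ℝ) else 0) - (if x ≤ 0 then (1:ℝ) else 0)) := by
  have hstep : ∀ s : ℝ, 2 * ((if x ≤ s then (1:ℝ) else 0) - (if x ≤ 0 then (1:ℝ) else 0)) =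
      (if x ≤ s then 1 else -1) + sgn x := by
    intro s
    rw [sgn_eq_one_sub_two_mul_ite hx]
    split_ifs <;> ring
  rw [← intervalIntegral.integral_const_mul]
  simp_rw [hstep]
  rw [intervalIntegral.integral_add (monotone_ite_le_one_neg_one x).intervalIntegrable
      intervalIntegrable_const, integral_ite_le_one_neg_one, intervalIntegral.integral_const,
    smul_eq_mul, abs_sub_comm x y]
  simp only [zero_sub, abs_neg]
  ring
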